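/- The three-valued evaluation of shapes is ≤_p-monotone: if three-valued interpretations satisfy 𝓘 ≤_p 𝓘' (i.e., 𝓘' is more precise), then for every shape φ and every node a, the truth value of φ at a in 𝓘 is less precise than or equal to its value in 𝓘' (where f and t are maximally precise and u least precise). -/

import Mathlib

/-- The three truth values: false, unknown, true. -/
inductive TV where
  | f | u | t
deriving DecidableEq

/-- Rank of a truth value in the truth order `f ≤ u ≤ t`. -/
def TV.rank : TV → ℕ
  | .f => 0
  | .u => 1
  | .t => 2

/-- Kleene negation. -/
def TV.neg : TV → TV
  | .f => .t
  | .u => .u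
  | .t => .f

/-- Kleene conjunction (minimum in the truth order). -/
def TV.conj (a b : TV) : TV := if a.rank ≤ b.rank then a else b

/-- The precision order on truth values: `u` is least precise, `t` and `f`
are maximally precise. -/
def TV.pprec (a b : TV) : Prop := a = TV.u ∨ a = b

/-- Path expressions over property names `P`. -/
inductive PathE (P : Type*) where
  | prop (p : P)
  | inv (E : PathE P)
  | union (E₁ E₂ : PathE P)
  | comp (E₁ E₂ : PathE P)
  | star (E : PathE P)
  | opt (E : PathE P)

/-- Shapes over node names `N`, property names `P`, and shape names `S`. -/
inductive Shape (N P S : Type*) where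
  | top
  | name (s : S)
  | singleton (c : N)
  | and (φ ψ : Shape N P S)
  | neg (φ : Shape N P S)
  | geq (n : ℕ) (E : PathE P) (φ : Shape N P S)
  | eq (E₁ E₂ : PathE P)
  | disj (E₁ E₂ : PathE P)
  | closed (Q : Set P)

variable {N P S Δ : Type*}

/-- Semantics of a path expression in the fixed graph-interpretation given by
the property interpretation `pI`. -/
def evalPath (pI : P → Δ → Δ → Prop) : PathE P → Δ → Δ → Prop
  | .prop p => pI p
  | .inv E => fun a b => evalPath pI E b a
  | .union E₁ E₂ => fun a b => evalPath pI E₁ a b ∨ evalPath pI E₂ a b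
  | .comp E₁ E₂ => fun a b => ∃ c, evalPath pI E₁ a c ∧ evalPath pI E₂ c b
  | .star E => Relation.ReflTransGen (evalPath pI E)
  | .opt E => fun a b => evalPath pI E a b ∨ a = b

/-- A set has at least `n` elements. -/
def AtLeast (n : ℕ) (X : Set Δ) : Prop :=
  ∃ g : Fin n → Δ, Function.Injective g ∧ ∀ i, g i ∈ X

open Classical in
/-- Three-valued (Kleene) evaluation of a shape in a three-valued
interpretation `I : S → Δ → TV` of the shape names, over the fixed
graph-interpretation given by `cI` and `pI`. -/
noncomputable def eval3 (cI : N → Δ) (pI : P → Δ → Δ → Prop) :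
    Shape N P S → (S → Δ → TV) → Δ → TV
  | .top, _, _ => TV.t
  | .name s, I, a => I s a
  | .singleton c, _, a => if a = cI c then TV.t else TV.f
  | .and φ ψ, I, a => (eval3 cI pI φ I a).conj (eval3 cI pI ψ I a)
  | .neg φ, I, a => (eval3 cI pI φ I a).neg
  | .geq n E φ, I, a =>
      if AtLeast n {b | evalPath pI E a b ∧ eval3 cI pI φ I b = TV.t} then TV.t
      else if AtLeast n {b | evalPath pI E a b ∧ eval3 cI pI φ I b ≠ TV.f} then TV.u
      else TV.f
  | .eq E₁ E₂, _, a =>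
      if ∀ b, evalPath pI E₁ a b ↔ evalPath pI E₂ a b then TV.t else TV.f
  | .disj E₁ E₂, _, a =>
      if ∀ b, ¬(evalPath pI E₁ a b ∧ evalPath pI E₂ a b) then TV.t else TV.f
  | .closed Q, _, a =>
      if ∀ p ∉ Q, ∀ b, ¬ pI p a b then TV.t else TV.f

/-- Two-valued evaluation of a shape in an interpretation `σ : S → Set Δ` of
the shape names, over the fixed graph-interpretation given by `cI` and `pI`. -/
def eval2 (cI : N → Δ) (pI : P → Δ → Δ → Prop) :
    Shape N P S → (S → Set Δ) → Set Δ
  | .top, _ => Set.univ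
  | .name s, σ => σ s
  | .singleton c, _ => {cI c}
  | .and φ ψ, σ => eval2 cI pI φ σ ∩ eval2 cI pI ψ σ
  | .neg φ, σ => (eval2 cI pI φ σ)ᶜ
  | .geq n E φ, σ => {a | AtLeast n {b | evalPath pI E a b ∧ b ∈ eval2 cI pI φ σ}}
  | .eq E₁ E₂, _ => {a | ∀ b, evalPath pI E₁ a b ↔ evalPath pI E₂ a b}
  | .disj E₁ E₂, _ => {a | ∀ b, ¬(evalPath pI E₁ a b ∧ evalPath pI E₂ a b)}
  | .closed Q, _ => {a | ∀ p ∉ Q, ∀ b, ¬ pI p a b}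

lemma TV.pprec.refl (a : TV) : a.pprec a := Or.inr rfl

lemma TV.pprec.neg {a b : TV} : a.pprec b → a.neg.pprec b.neg := by
  rintro (rfl | rfl)
  exacts [Or.inl rfl, TV.pprec.refl _]

lemma TV.pprec.conj {a b c d : TV} (hab : a.pprec b) (hcd : c.pprec d) :
    (a.conj c).pprec (b.conj d) := by
  cases a <;> cases b <;> cases c <;> cases d <;>
    simp_all [TV.pprec, TV.conj, TV.rank]

lemma TV.pprec.eq_t {a b : TV} (hab : a.pprec b) (ha : a = .t) : b = .t := by
  rcases hab with rfl | rfl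
  · cases ha
  · exact ha

lemma TV.pprec.ne_f {a b : TV} (hab : a.pprec b) (hb : b ≠ .f) : a ≠ .f := by
  rcases hab with rfl | rfl
  exacts [nofun, hb]

lemma AtLeast.mono {n : ℕ} {X Y : Set Δ} (hXY : X ⊆ Y) : AtLeast n X → AtLeast n Y :=
  fun ⟨g, hg, hX⟩ => ⟨g, hg, fun i => hXY (hX i)⟩

/- `T` and `U` are the successors at which the quantified shape is `t`, resp. not `f`; refining the
interpretation can only move successors from `U \ T` into `T'` or out of `U'`. -/
open Classical in
lemma pprec_ite_atLeast {n : ℕ} {T U T' U' : Set Δ} (hT : T ⊆ T') (hU : U' ⊆ U) (hTU' : T' ⊆ U') :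
    (if AtLeast n T then TV.t else if AtLeast n U then TV.u else TV.f).pprec
      (if AtLeast n T' then TV.t else if AtLeast n U' then TV.u else TV.f) := by
  by_cases hnT : AtLeast n T
  · simp only [hnT, hnT.mono hT, if_true]; exact TV.pprec.refl _
  by_cases hnU : AtLeast n U
  · simp only [hnT, hnU, if_true, if_false]; exact Or.inl rfl
  have hnU' : ¬AtLeast n U' := fun h => hnU (h.mono hU)
  have hnT' : ¬AtLeast n T' := fun h => hnU' (h.mono hTU')
  simp only [hnT, hnU, hnT', hnU', if_false]; exact TV.pprec.refl _

/-- The three-valued evaluation of shapes is `≤_p`-monotone: a more precise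
three-valued interpretation yields a more precise truth value for every shape
at every node. -/
theorem stmt_14 (cI : N → Δ) (pI : P → Δ → Δ → Prop)
    (I I' : S → Δ → TV) (h : ∀ s a, (I s a).pprec (I' s a)) :
    ∀ (φ : Shape N P S) (a : Δ),
      (eval3 cI pI φ I a).pprec (eval3 cI pI φ I' a) := by
  intro φ
  induction φ with
  | name s => exact h s
  | and φ ψ ihφ ihψ => exact fun a => (ihφ a).conj (ihψ a)
  | neg φ ihφ => exact fun a => (ihφ a).neg
  | geq n E φ ih =>
    exact fun a => pprec_ite_atLeast
      (fun b ⟨hE, ht⟩ => ⟨hE, (ih b).eq_t ht⟩)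
      (fun b ⟨hE, hf⟩ => ⟨hE, (ih b).ne_f hf⟩)
      (fun b ⟨hE, ht⟩ => ⟨hE, ht ▸ nofun⟩)
  | top | singleton | eq | disj | closed => exact fun a => TV.pprec.refl _
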